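/- arXiv:2307.03357 — 4 statements merged into one kernel-verified Lean document; each statement's English description precedes it below -/
import Mathlib

section
/- For the SCGD iterates, for every integer t ≥ 1 and every real c > 0, E_A‖y_{t+1} − g_S(x_t)‖² ≤ (c/e)^c · (tβ)^{−c} · E_A‖y_1 − g_S(x_0)‖² + L_f²·L_g⁴·η²·β^{−2} + 2·V_g·β. -/
open MeasureTheory
open scoped ENNReal

/-!
The state `(x_t, y_t)` of SCGD is a deterministic function of the indices drawn before time `t`,
so it is independent of `j_t`; averaging over the uniform index `j_t` kills the cross term
`⟪y_t - g_S(x_t), g_{j_t}(x_t) - g_S(x_t)⟫` and bounds the remaining noise by `V_g`. Since a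
projected step moves `x` by at most `η L_g L_f`, the target `g_S(x_t)` drifts by at most
`η L_f L_g²`, and Young's inequality gives the contraction
`D_{t+1} ≤ (1 - β) D_t + (η L_f L_g²)² / β + β² V_g` for `D_t = E‖y_{t+1} - g_S(x_t)‖²`.
Unrolling, `(1 - β)^t ≤ exp(-tβ) ≤ (c/e)^c (tβ)^{-c}`.
-/

open ProbabilityTheory
open scoped RealInnerProductSpace

theorem integrable_comp_of_finite_range {Ω α : Type*} [MeasurableSpace Ω] [MeasurableSpace α]
    [MeasurableSingletonClass α] {μ : Measure Ω} [IsFiniteMeasure μ] {Z : Ω → α}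
    (hZ : Measurable Z) (hrange : (Set.range Z).Finite) (h : α → ℝ) :
    Integrable (fun ω => h (Z ω)) μ := by
  have hmeas : Measurable fun ω => h (Z ω) := fun T _ => by
    change MeasurableSet (Z ⁻¹' (h ⁻¹' T))
    rw [← Set.preimage_inter_range]
    exact hZ (hrange.subset Set.inter_subset_right).measurableSet
  obtain ⟨C, hC⟩ := ((hrange.image h).image (‖·‖)).bddAbove
  exact Integrable.of_bound hmeas.aestronglyMeasurable C
    (ae_of_all _ fun ω => hC ⟨h (Z ω), ⟨Z ω, ⟨ω, rfl⟩, rfl⟩, rfl⟩)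

theorem integral_comp_eq_integral_average {Ω α ι : Type*} [MeasurableSpace Ω]
    [MeasurableSpace α] [Fintype ι] [MeasurableSpace ι] [MeasurableSingletonClass ι]
    {μ : Measure Ω} {Z : Ω → α} {J : Ω → ι} (hZ : Measurable Z) (hJ : Measurable J)
    (hind : IndepFun Z J μ) (hunif : ∀ b, μ {ω | J ω = b} = (Fintype.card ι : ℝ≥0∞)⁻¹)
    {ψ : α → ι → ℝ} (hψ : ∀ b, Measurable fun a => ψ a b)
    (hint : ∀ b, Integrable (fun ω => ψ (Z ω) b) μ) :
    ∫ ω, ψ (Z ω) (J ω) ∂μ = ∫ ω, (Fintype.card ι : ℝ)⁻¹ * ∑ b, ψ (Z ω) b ∂μ := by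
  classical
  let e : ι → ι → ℝ := fun b j => if j = b then 1 else 0
  have he : ∀ b, Measurable (e b) := fun b => measurable_of_finite _
  have hsplit : ∀ ω, ψ (Z ω) (J ω) = ∑ b, e b (J ω) * ψ (Z ω) b := by
    intro ω
    simp [e]
  have hterm : ∀ b, ∫ ω, e b (J ω) * ψ (Z ω) b ∂μ =
      (Fintype.card ι : ℝ)⁻¹ * ∫ ω, ψ (Z ω) b ∂μ := by
    intro b
    have hprob : ∫ ω, e b (J ω) ∂μ = (Fintype.card ι : ℝ)⁻¹ := by
      have : (fun ω => e b (J ω)) = {ω | J ω = b}.indicator 1 := by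
        ext ω; by_cases h : J ω = b <;> simp [e, h]
      rw [this, integral_indicator_one (s := {ω | J ω = b}) (hJ (measurableSet_singleton b)),
        measureReal_def, hunif]
      simp
    rw [hind.symm.integral_fun_comp_mul_comp hJ.aemeasurable hZ.aemeasurable
      (he b).aestronglyMeasurable (hψ b).aestronglyMeasurable, hprob]
  have hint_term : ∀ b, Integrable (fun ω => e b (J ω) * ψ (Z ω) b) μ := fun b =>
    (hint b).bdd_mul (c := 1) ((he b).comp hJ).aestronglyMeasurable
      (ae_of_all _ fun ω => by by_cases h : J ω = b <;> simp [e, h])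
  rw [integral_congr_ae (ae_of_all _ hsplit), integral_finsetSum _ fun b _ => hint_term b,
    integral_const_mul, integral_finsetSum _ fun b _ => hint b, Finset.mul_sum]
  exact Finset.sum_congr rfl fun b _ => hterm b

section History

variable {Ω S E : Type*} {ξ : ℕ → Ω → E} {z : ℕ → Ω → S} {F : S → E → S} {s₀ : S}

theorem exists_eq_comp_history (h0 : ∀ ω, z 0 ω = s₀)
    (hstep : ∀ t ω, z (t + 1) ω = F (z t ω) (ξ t ω)) (t : ℕ) :
    ∃ Φ : (Finset.range t → E) → S, ∀ ω, z t ω = Φ fun i => ξ i ω := by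
  induction t with
  | zero => exact ⟨fun _ => s₀, h0⟩
  | succ t ih =>
    obtain ⟨Φ, hΦ⟩ := ih
    refine ⟨fun v => F (Φ fun i => v ⟨i, Finset.range_subset_range.2 t.le_succ i.2⟩)
      (v ⟨t, Finset.self_mem_range_succ t⟩), fun ω => ?_⟩
    rw [hstep, hΦ]

theorem finite_range_of_history [Finite E] (h0 : ∀ ω, z 0 ω = s₀)
    (hstep : ∀ t ω, z (t + 1) ω = F (z t ω) (ξ t ω)) (t : ℕ) : (Set.range (z t)).Finite := by
  obtain ⟨Φ, hΦ⟩ := exists_eq_comp_history h0 hstep t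
  exact (Set.finite_range Φ).subset (Set.range_subset_iff.2 fun ω => ⟨_, (hΦ ω).symm⟩)

variable [MeasurableSpace Ω] [MeasurableSpace S] [MeasurableSpace E] [Countable E]
  [MeasurableSingletonClass E]

theorem measurable_of_history (hξ : ∀ t, Measurable (ξ t)) (h0 : ∀ ω, z 0 ω = s₀)
    (hstep : ∀ t ω, z (t + 1) ω = F (z t ω) (ξ t ω)) (t : ℕ) : Measurable (z t) := by
  obtain ⟨Φ, hΦ⟩ := exists_eq_comp_history h0 hstep t
  rw [funext hΦ]
  exact (measurable_of_countable Φ).comp (measurable_pi_lambda _ fun i => hξ i)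

theorem indepFun_of_history {μ : Measure Ω} (hξ : ∀ t, Measurable (ξ t))
    (hind : iIndepFun ξ μ) (h0 : ∀ ω, z 0 ω = s₀)
    (hstep : ∀ t ω, z (t + 1) ω = F (z t ω) (ξ t ω)) (t : ℕ) : IndepFun (z t) (ξ t) μ := by
  obtain ⟨Φ, hΦ⟩ := exists_eq_comp_history h0 hstep t
  rw [funext hΦ]
  exact (hind.indepFun_finset (Finset.range t) {t} (by simp) hξ).comp
    (measurable_of_countable Φ) (measurable_pi_apply ⟨t, Finset.mem_singleton_self t⟩)

end History

theorem sum_sub_average_eq_zero {ι F : Type*} [Fintype ι] [Nonempty ι] [AddCommGroup F]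
    [Module ℝ F] (v : ι → F) : ∑ i, (v i - (Fintype.card ι : ℝ)⁻¹ • ∑ j, v j) = 0 := by
  have hcard : (Fintype.card ι : ℝ) ≠ 0 := by exact_mod_cast Fintype.card_ne_zero
  rw [Finset.sum_sub_distrib, Finset.sum_const, Finset.card_univ, ← Nat.cast_smul_eq_nsmul ℝ,
    smul_smul, mul_inv_cancel₀ hcard, one_smul, sub_self]

theorem norm_average_sub_average_le {ι E F : Type*} [Fintype ι] [Nonempty ι]
    [SeminormedAddCommGroup E] [SeminormedAddCommGroup F] [NormedSpace ℝ F] {g : ι → E → F}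
    {L : ℝ} (hg : ∀ i x₁ x₂, ‖g i x₁ - g i x₂‖ ≤ L * ‖x₁ - x₂‖) (x₁ x₂ : E) :
    ‖(Fintype.card ι : ℝ)⁻¹ • ∑ i, g i x₁ - (Fintype.card ι : ℝ)⁻¹ • ∑ i, g i x₂‖ ≤
      L * ‖x₁ - x₂‖ := by
  have hcard : (0 : ℝ) < Fintype.card ι := by exact_mod_cast Fintype.card_pos
  rw [← smul_sub, ← Finset.sum_sub_distrib, norm_smul, norm_inv, Real.norm_natCast,
    inv_mul_le_iff₀ hcard]
  calc ‖∑ i, (g i x₁ - g i x₂)‖ ≤ ∑ i : ι, L * ‖x₁ - x₂‖ :=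
        (norm_sum_le _ _).trans (Finset.sum_le_sum fun i _ => hg i x₁ x₂)
    _ = Fintype.card ι * (L * ‖x₁ - x₂‖) := by simp

section InnerProductSpace

variable {E F : Type*} [NormedAddCommGroup E] [InnerProductSpace ℝ E]
  [NormedAddCommGroup F] [InnerProductSpace ℝ F]

theorem Convex.norm_sub_le_of_forall_dist_le {K : Set E} (hK : Convex ℝ K) {z pz w : E}
    (hpz : pz ∈ K) (hmin : ∀ u ∈ K, dist pz z ≤ dist u z) (hw : w ∈ K) :
    ‖pz - w‖ ≤ ‖z - w‖ := by
  have : Nonempty K := ⟨⟨pz, hpz⟩⟩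
  have hinf : ‖z - pz‖ = ⨅ u : K, ‖z - u‖ := by
    have hbdd : BddBelow (Set.range fun u : K => ‖z - u‖) :=
      ⟨0, by rintro _ ⟨u, rfl⟩; exact norm_nonneg _⟩
    refine le_antisymm (le_ciInf fun u => ?_) (ciInf_le hbdd ⟨pz, hpz⟩)
    simpa [dist_eq_norm, norm_sub_rev] using hmin u u.2
  have hinner : ⟪z - pz, w - pz⟫ ≤ 0 :=
    (norm_eq_iInf_iff_real_inner_le_zero hK hpz).1 hinf w hw
  have hexpand : ‖z - w‖ ^ 2 = ‖z - pz‖ ^ 2 - 2 * ⟪z - pz, w - pz⟫ + ‖pz - w‖ ^ 2 := by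
    rw [show z - w = (z - pz) - (w - pz) by abel, norm_sub_sq_real, norm_sub_rev w]
  exact (pow_le_pow_iff_left₀ (norm_nonneg _) (norm_nonneg _) two_ne_zero).1
    (by nlinarith [sq_nonneg ‖z - pz‖])

theorem norm_adjoint_fderiv_apply_gradient_le [CompleteSpace E] [CompleteSpace F]
    {f : F → ℝ} {g : E → F} {Cf Cg : ℝ} (hCf : 0 ≤ Cf) (hCg : 0 ≤ Cg)
    (hf : ∀ y₁ y₂, |f y₁ - f y₂| ≤ Cf * ‖y₁ - y₂‖)
    (hg : ∀ x₁ x₂, ‖g x₁ - g x₂‖ ≤ Cg * ‖x₁ - x₂‖) (x : E) (y : F) :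
    ‖(fderiv ℝ g x).adjoint (gradient f y)‖ ≤ Cg * Cf := by
  have hDg : ‖fderiv ℝ g x‖ ≤ Cg := norm_fderiv_le_of_lip' ℝ hCg (.of_forall fun x' => hg x' x)
  have hDf : ‖gradient f y‖ ≤ Cf := by
    rw [gradient, LinearIsometryEquiv.norm_map]
    exact norm_fderiv_le_of_lip' ℝ hCf (.of_forall fun y' => hf y' y)
  calc ‖(fderiv ℝ g x).adjoint (gradient f y)‖
      ≤ ‖(fderiv ℝ g x).adjoint‖ * ‖gradient f y‖ := ContinuousLinearMap.le_opNorm _ _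
    _ ≤ Cg * Cf := by
      rw [LinearIsometryEquiv.norm_map]
      exact mul_le_mul hDg hDf (norm_nonneg _) hCg

theorem norm_proj_sub_le_of_gradient_step [CompleteSpace E] [CompleteSpace F] {K : Set E}
    (hK : Convex ℝ K) {proj : E → E} (hproj : ∀ z, proj z ∈ K ∧ ∀ w ∈ K, dist (proj z) z ≤ dist w z)
    {f : F → ℝ} {g : E → F} {Cf Cg η : ℝ} (hCf : 0 ≤ Cf) (hCg : 0 ≤ Cg) (hη : 0 ≤ η)
    (hf : ∀ y₁ y₂, |f y₁ - f y₂| ≤ Cf * ‖y₁ - y₂‖)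
    (hg : ∀ x₁ x₂, ‖g x₁ - g x₂‖ ≤ Cg * ‖x₁ - x₂‖) {w : E} (hw : w ∈ K) (y : F) :
    ‖proj (w - η • (fderiv ℝ g w).adjoint (gradient f y)) - w‖ ≤ η * (Cg * Cf) := by
  refine (hK.norm_sub_le_of_forall_dist_le (hproj _).1 (hproj _).2 hw).trans ?_
  rw [sub_sub_cancel_left, norm_neg, norm_smul, Real.norm_of_nonneg hη]
  exact mul_le_mul_of_nonneg_left (norm_adjoint_fderiv_apply_gradient_le hCf hCg hf hg w y) hη

theorem norm_one_sub_smul_add_smul_sq_le {β a δ : ℝ} (hβ0 : 0 < β) (hβ1 : β ≤ 1)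
    {u v : F} (hu : ‖u‖ ≤ a + δ) :
    ‖(1 - β) • u + β • v‖ ^ 2 ≤
      (1 - β) * a ^ 2 + δ ^ 2 / β + (β ^ 2 * ‖v‖ ^ 2 + 2 * (1 - β) * β * ⟪u, v⟫) := by
  have hexpand : ‖(1 - β) • u + β • v‖ ^ 2 =
      (1 - β) ^ 2 * ‖u‖ ^ 2 + (β ^ 2 * ‖v‖ ^ 2 + 2 * (1 - β) * β * ⟪u, v⟫) := by
    rw [norm_add_sq_real, norm_smul, norm_smul, real_inner_smul_left, real_inner_smul_right,
      Real.norm_of_nonneg hβ0.le, Real.norm_of_nonneg (sub_nonneg.2 hβ1)]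
    ring
  -- Young's inequality `(a + δ)² ≤ a² / (1 - β) + δ² / β`, cleared of denominators
  have hyoung : β * ((1 - β) ^ 2 * ‖u‖ ^ 2) ≤ β * ((1 - β) * a ^ 2) + δ ^ 2 := by
    have hu2 : ‖u‖ ^ 2 ≤ (a + δ) ^ 2 := pow_le_pow_left₀ (norm_nonneg u) hu 2
    nlinarith [sq_nonneg (β * a - (1 - β) * δ), mul_nonneg hβ0.le (sub_nonneg.2 hβ1),
      mul_le_mul_of_nonneg_left hu2 (mul_nonneg hβ0.le (sq_nonneg (1 - β))),
      mul_nonneg (mul_nonneg hβ0.le hβ0.le) (sq_nonneg δ), sq_nonneg a]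
  have : (1 - β) ^ 2 * ‖u‖ ^ 2 ≤ (1 - β) * a ^ 2 + δ ^ 2 / β := by
    rw [add_div' _ _ _ hβ0.ne', le_div_iff₀ hβ0]
    linarith
  rw [hexpand]
  linarith

end InnerProductSpace

theorem le_pow_mul_add_div_of_le_mul_add {D : ℕ → ℝ} {β C : ℝ} (hβ0 : 0 < β) (hβ1 : β ≤ 1)
    (hC : 0 ≤ C) (h : ∀ t, D (t + 1) ≤ (1 - β) * D t + C) (t : ℕ) :
    D t ≤ (1 - β) ^ t * D 0 + C / β := by
  induction t with
  | zero => simpa using div_nonneg hC hβ0.le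
  | succ t ih =>
    calc D (t + 1) ≤ (1 - β) * ((1 - β) ^ t * D 0 + C / β) + C :=
          (h t).trans (by gcongr)
      _ = (1 - β) ^ (t + 1) * D 0 + C / β := by field_simp; ring

theorem Real.exp_neg_le_rpow_neg {c s : ℝ} (hc : 0 < c) (hs : 0 < s) :
    Real.exp (-s) ≤ (c / Real.exp 1) ^ c * s ^ (-c) := by
  have hlog : c * Real.log (s / c) ≤ s - c := by
    have := mul_le_mul_of_nonneg_left (Real.log_le_sub_one_of_pos (div_pos hs hc)) hc.le
    rwa [mul_sub, mul_div_cancel₀ _ hc.ne', mul_one] at this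
  rw [Real.rpow_def_of_pos (by positivity), Real.rpow_def_of_pos hs, ← Real.exp_add,
    Real.exp_le_exp, Real.log_div hc.ne' (Real.exp_pos 1).ne', Real.log_exp]
  rw [Real.log_div hs.ne' hc.ne'] at hlog
  nlinarith

theorem one_sub_pow_le_rpow_neg {β c : ℝ} (hβ : β ≤ 1) (hc : 0 < c) {t : ℕ} (ht : 0 < t * β) :
    (1 - β) ^ t ≤ (c / Real.exp 1) ^ c * (t * β) ^ (-c) := by
  have ht0 : (t : ℝ) ≠ 0 := by rintro h; simp [h] at ht
  calc (1 - β) ^ t = (1 - t * β / t) ^ t := by rw [mul_div_cancel_left₀ _ ht0]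
    _ ≤ Real.exp (-(t * β)) := Real.one_sub_div_pow_le_exp_neg (by nlinarith)
    _ ≤ _ := Real.exp_neg_le_rpow_neg hc ht
theorem le_rpow_neg_mul_add_div_of_le_mul_add {D : ℕ → ℝ} {β C c : ℝ} (hβ0 : 0 < β)
    (hβ1 : β ≤ 1) (hC : 0 ≤ C) (hD0 : 0 ≤ D 0) (h : ∀ t, D (t + 1) ≤ (1 - β) * D t + C)
    (hc : 0 < c) {t : ℕ} (ht : 1 ≤ t) :
    D t ≤ (c / Real.exp 1) ^ c * (t * β) ^ (-c) * D 0 + C / β := by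
  have htβ : 0 < (t : ℝ) * β := mul_pos (by exact_mod_cast ht) hβ0
  refine (le_pow_mul_add_div_of_le_mul_add hβ0 hβ1 hC h t).trans ?_
  gcongr
  exact one_sub_pow_le_rpow_neg hβ1 hc htβ

section Tracking

variable {Ω E F ι : Type*} [MeasurableSpace Ω] {μ : Measure Ω} [Fintype ι] [MeasurableSpace ι]
  [MeasurableSingletonClass ι] {x : ℕ → Ω → E} {y : ℕ → Ω → F} {J : ℕ → Ω → ι}

theorem integrable_comp_state_index [IsFiniteMeasure μ] [MeasurableSpace E]
    [MeasurableSingletonClass E] [MeasurableSpace F] [MeasurableSingletonClass F]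
    (hmeas : ∀ t, Measurable fun ω => (x t ω, y t ω)) (hJmeas : ∀ t, Measurable (J t))
    (hfin : ∀ t, (Set.range fun ω => (x t ω, y t ω)).Finite) (t : ℕ) (h : (E × F) × ι → ℝ) :
    Integrable (fun ω => h ((x t ω, y t ω), J t ω)) μ :=
  integrable_comp_of_finite_range ((hmeas t).prodMk (hJmeas t))
    (((hfin t).prod (Set.toFinite _)).subset (Set.range_pair_subset _ _)) h

theorem integrable_norm_sq_tracking_error [IsFiniteMeasure μ] [MeasurableSpace E]
    [MeasurableSingletonClass E] [NormedAddCommGroup F] [Module ℝ F] [MeasurableSpace F]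
    [MeasurableSingletonClass F] {g : ι → E → F} {gS : E → F} {β : ℝ}
    (hyrec : ∀ t ω, y (t + 1) ω = (1 - β) • y t ω + β • g (J t ω) (x t ω))
    (hmeas : ∀ t, Measurable fun ω => (x t ω, y t ω)) (hJmeas : ∀ t, Measurable (J t))
    (hfin : ∀ t, (Set.range fun ω => (x t ω, y t ω)).Finite) (t : ℕ) :
    Integrable (fun ω => ‖y (t + 1) ω - gS (x t ω)‖ ^ 2) μ := by
  simp_rw [hyrec]
  exact integrable_comp_state_index hmeas hJmeas hfin t fun q =>
    ‖(1 - β) • q.1.2 + β • g q.2 q.1.1 - gS q.1.1‖ ^ 2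

theorem integral_norm_sq_tracking_error_succ_le [IsProbabilityMeasure μ] [Nonempty ι]
    [NormedAddCommGroup E] [MeasurableSpace E] [BorelSpace E] [SecondCountableTopology E]
    [NormedAddCommGroup F] [InnerProductSpace ℝ F] [MeasurableSpace F] [BorelSpace F]
    [SecondCountableTopology F] {g : ι → E → F} (hg : ∀ i, Continuous (g i))
    {gS : E → F} (hgS : ∀ z, gS z = (Fintype.card ι : ℝ)⁻¹ • ∑ i, g i z)
    {X : Set E} {Vg : ℝ} (hVg : ∀ z ∈ X, (Fintype.card ι : ℝ)⁻¹ * ∑ i, ‖g i z - gS z‖ ^ 2 ≤ Vg)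
    {β δ : ℝ} (hβ0 : 0 < β) (hβ1 : β ≤ 1)
    (hyrec : ∀ t ω, y (t + 1) ω = (1 - β) • y t ω + β • g (J t ω) (x t ω))
    (hX : ∀ t ω, x t ω ∈ X) (hdrift : ∀ t ω, ‖gS (x t ω) - gS (x (t + 1) ω)‖ ≤ δ)
    (hmeas : ∀ t, Measurable fun ω => (x t ω, y t ω)) (hJmeas : ∀ t, Measurable (J t))
    (hfin : ∀ t, (Set.range fun ω => (x t ω, y t ω)).Finite)
    (hindep : ∀ t, IndepFun (fun ω => (x t ω, y t ω)) (J t) μ)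
    (hJunif : ∀ t b, μ {ω | J t ω = b} = (Fintype.card ι : ℝ≥0∞)⁻¹) (t : ℕ) :
    ∫ ω, ‖y (t + 1 + 1) ω - gS (x (t + 1) ω)‖ ^ 2 ∂μ ≤
      (1 - β) * ∫ ω, ‖y (t + 1) ω - gS (x t ω)‖ ^ 2 ∂μ + (δ ^ 2 / β + β ^ 2 * Vg) := by
  have hint := integrable_comp_state_index (μ := μ) hmeas hJmeas hfin
  have hint_error := integrable_norm_sq_tracking_error (μ := μ) (gS := gS) hyrec hmeas hJmeas hfin
  have hgS_cont : Continuous gS := by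
    rw [funext hgS]
    exact continuous_const.smul (continuous_finsetSum _ fun i _ => hg i)
  let Q : E × F → ι → ℝ := fun q b =>
    β ^ 2 * ‖g b q.1 - gS q.1‖ ^ 2 + 2 * (1 - β) * β * ⟪q.2 - gS q.1, g b q.1 - gS q.1⟫
  have hQ_meas : ∀ b, Measurable fun q => Q q b := fun b =>
    Continuous.measurable (by have := hg b; fun_prop)
  have hQ_average : ∀ q : E × F, q.1 ∈ X → (Fintype.card ι : ℝ)⁻¹ * ∑ b, Q q b ≤ β ^ 2 * Vg := by
    rintro ⟨z, w⟩ hz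
    have hcentered : ∑ b, (g b z - gS z) = 0 := by
      rw [hgS]
      exact sum_sub_average_eq_zero fun b => g b z
    have hsum : ∑ b, Q (z, w) b = β ^ 2 * ∑ b, ‖g b z - gS z‖ ^ 2 := by
      simp only [Q, Finset.sum_add_distrib, ← Finset.mul_sum, ← inner_sum, hcentered,
        inner_zero_right, mul_zero, add_zero]
    rw [hsum, mul_left_comm]
    exact mul_le_mul_of_nonneg_left (hVg z hz) (sq_nonneg β)
  have hpoint : ∀ ω, ‖y (t + 1 + 1) ω - gS (x (t + 1) ω)‖ ^ 2 ≤
      ((1 - β) * ‖y (t + 1) ω - gS (x t ω)‖ ^ 2 + δ ^ 2 / β) +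
        Q (x (t + 1) ω, y (t + 1) ω) (J (t + 1) ω) := by
    intro ω
    have hsplit : y (t + 1 + 1) ω - gS (x (t + 1) ω) =
        (1 - β) • (y (t + 1) ω - gS (x (t + 1) ω)) +
          β • (g (J (t + 1) ω) (x (t + 1) ω) - gS (x (t + 1) ω)) := by
      rw [hyrec (t + 1)]
      module
    have htri : ‖y (t + 1) ω - gS (x (t + 1) ω)‖ ≤ ‖y (t + 1) ω - gS (x t ω)‖ + δ := by
      linarith [norm_sub_le_norm_sub_add_norm_sub (y (t + 1) ω) (gS (x t ω)) (gS (x (t + 1) ω)),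
        hdrift t ω]
    rw [hsplit]
    exact norm_one_sub_smul_add_smul_sq_le hβ0 hβ1 htri
  have hint_Q : Integrable (fun ω => Q (x (t + 1) ω, y (t + 1) ω) (J (t + 1) ω)) μ :=
    hint (t + 1) fun q => Q q.1 q.2
  have hint_drift : Integrable
      (fun ω => (1 - β) * ‖y (t + 1) ω - gS (x t ω)‖ ^ 2 + δ ^ 2 / β) μ :=
    ((hint_error t).const_mul _).add (integrable_const _)
  calc ∫ ω, ‖y (t + 1 + 1) ω - gS (x (t + 1) ω)‖ ^ 2 ∂μ
      ≤ ∫ ω, ((1 - β) * ‖y (t + 1) ω - gS (x t ω)‖ ^ 2 + δ ^ 2 / β) +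
          Q (x (t + 1) ω, y (t + 1) ω) (J (t + 1) ω) ∂μ :=
        integral_mono (hint_error (t + 1)) (hint_drift.add hint_Q) hpoint
    _ = (1 - β) * ∫ ω, ‖y (t + 1) ω - gS (x t ω)‖ ^ 2 ∂μ + δ ^ 2 / β +
          ∫ ω, (Fintype.card ι : ℝ)⁻¹ * ∑ b, Q (x (t + 1) ω, y (t + 1) ω) b ∂μ := by
        rw [integral_add hint_drift hint_Q,
          integral_add ((hint_error t).const_mul _) (integrable_const _), integral_const_mul,
          integral_const, probReal_univ, one_smul,
          integral_comp_eq_integral_average (hmeas (t + 1)) (hJmeas (t + 1)) (hindep (t + 1))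
            (hJunif (t + 1)) hQ_meas fun b => hint (t + 1) fun q => Q q.1 b]
    _ ≤ (1 - β) * ∫ ω, ‖y (t + 1) ω - gS (x t ω)‖ ^ 2 ∂μ + δ ^ 2 / β + β ^ 2 * Vg := by
        gcongr
        refine (integral_mono (hint (t + 1) fun q => (Fintype.card ι : ℝ)⁻¹ * ∑ b, Q q.1 b)
          (integrable_const _) fun ω => hQ_average _ (hX (t + 1) ω)).trans_eq ?_
        simp
    _ = _ := by ring

end Tracking

theorem lintegral_nnnorm_sq_eq_ofReal_integral {Ω E : Type*} [MeasurableSpace Ω]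
    [NormedAddCommGroup E] {μ : Measure Ω} {f : Ω → E}
    (hf : Integrable (fun ω => ‖f ω‖ ^ 2) μ) :
    ∫⁻ ω, (‖f ω‖₊ : ℝ≥0∞) ^ 2 ∂μ = ENNReal.ofReal (∫ ω, ‖f ω‖ ^ 2 ∂μ) := by
  rw [ofReal_integral_eq_lintegral_ofReal hf (ae_of_all _ fun ω => sq_nonneg _)]
  refine lintegral_congr fun ω => ?_
  rw [ENNReal.ofReal_pow (norm_nonneg _), ofReal_norm, enorm_eq_nnnorm]

theorem lintegral_nnnorm_sq_le_of_integral_le {Ω E : Type*} [MeasurableSpace Ω]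
    [NormedAddCommGroup E] {μ : Measure Ω} {f₀ f : Ω → E} {K B : ℝ} (hK : 0 ≤ K)
    (hf₀ : Integrable (fun ω => ‖f₀ ω‖ ^ 2) μ) (hf : Integrable (fun ω => ‖f ω‖ ^ 2) μ)
    (h : ∫ ω, ‖f ω‖ ^ 2 ∂μ ≤ K * ∫ ω, ‖f₀ ω‖ ^ 2 ∂μ + B) :
    ∫⁻ ω, (‖f ω‖₊ : ℝ≥0∞) ^ 2 ∂μ ≤
      ENNReal.ofReal K * ∫⁻ ω, (‖f₀ ω‖₊ : ℝ≥0∞) ^ 2 ∂μ + ENNReal.ofReal B := by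
  rw [lintegral_nnnorm_sq_eq_ofReal_integral hf, lintegral_nnnorm_sq_eq_ofReal_integral hf₀,
    ← ENNReal.ofReal_mul hK]
  exact (ENNReal.ofReal_le_ofReal h).trans ENNReal.ofReal_add_le

theorem stmt_13_general
    (p d n m : ℕ) (hm : 1 ≤ m)
    (X : Set (EuclideanSpace ℝ (Fin p)))
    (hXconv : Convex ℝ X)
    (proj : EuclideanSpace ℝ (Fin p) → EuclideanSpace ℝ (Fin p))
    (hproj : ∀ z, proj z ∈ X ∧ ∀ w ∈ X, dist (proj z) z ≤ dist w z)
    (f : Fin n → EuclideanSpace ℝ (Fin d) → ℝ)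
    (g : Fin m → EuclideanSpace ℝ (Fin p) → EuclideanSpace ℝ (Fin d))
    (Lf Lg Vg η β : ℝ)
    (hLf : 0 < Lf) (hLg : 0 < Lg) (hη : 0 < η) (hβ0 : 0 < β) (hβ1 : β < 1)
    (hflip : ∀ i y₁ y₂, |f i y₁ - f i y₂| ≤ Lf * ‖y₁ - y₂‖)
    (hglip : ∀ j x₁ x₂, ‖g j x₁ - g j x₂‖ ≤ Lg * ‖x₁ - x₂‖)
    (gS : EuclideanSpace ℝ (Fin p) → EuclideanSpace ℝ (Fin d))
    (hgS : ∀ z, gS z = (m : ℝ)⁻¹ • ∑ j, g j z)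
    (hVg : ∀ z ∈ X, (m : ℝ)⁻¹ * ∑ j, ‖g j z - gS z‖ ^ 2 ≤ Vg)
    -- random indices
    (Ω : Type) [MeasurableSpace Ω] (μ : Measure Ω) [IsProbabilityMeasure μ]
    (I : ℕ → Ω → Fin n) (J : ℕ → Ω → Fin m)
    (hImeas : ∀ t, Measurable (I t)) (hJmeas : ∀ t, Measurable (J t))
    (hJunif : ∀ t b, μ {ω | J t ω = b} = (m : ℝ≥0∞)⁻¹)
    (hiid : ProbabilityTheory.iIndepFun
      (fun t ω => (I t ω, J t ω)) μ)
    -- SCGD iterates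
    (x0 : EuclideanSpace ℝ (Fin p)) (y0 : EuclideanSpace ℝ (Fin d)) (hx0 : x0 ∈ X)
    (x : ℕ → Ω → EuclideanSpace ℝ (Fin p)) (y : ℕ → Ω → EuclideanSpace ℝ (Fin d))
    (hxinit : ∀ ω, x 0 ω = x0) (hyinit : ∀ ω, y 0 ω = y0)
    (hyrec : ∀ t ω, y (t + 1) ω = (1 - β) • y t ω + β • g (J t ω) (x t ω))
    (hxrec : ∀ t ω, x (t + 1) ω = proj (x t ω - η •
      (ContinuousLinearMap.adjoint (fderiv ℝ (g (J t ω)) (x t ω))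
        (gradient (f (I t ω)) (y (t + 1) ω))))) :
    ∀ t : ℕ, 1 ≤ t → ∀ c : ℝ, 0 < c →
      ∫⁻ ω, (‖y (t + 1) ω - gS (x t ω)‖₊ : ℝ≥0∞) ^ 2 ∂μ ≤
        ENNReal.ofReal ((c / Real.exp 1) ^ c * ((t : ℝ) * β) ^ (-c)) *
            ∫⁻ ω, (‖y 1 ω - gS (x 0 ω)‖₊ : ℝ≥0∞) ^ 2 ∂μ +
          ENNReal.ofReal (Lf ^ 2 * Lg ^ 4 * η ^ 2 / β ^ 2 + 2 * Vg * β) := by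
  intro t ht c hc
  have : Nonempty (Fin m) := ⟨⟨0, hm⟩⟩
  have hX : ∀ t ω, x t ω ∈ X := by
    rintro (_ | t) ω
    · exact hxinit ω ▸ hx0
    · exact hxrec t ω ▸ (hproj _).1
  have hdrift : ∀ t ω, ‖gS (x t ω) - gS (x (t + 1) ω)‖ ≤ η * Lf * Lg ^ 2 := fun t ω =>
    calc ‖gS (x t ω) - gS (x (t + 1) ω)‖ ≤ Lg * ‖x t ω - x (t + 1) ω‖ := by
          simpa [hgS] using norm_average_sub_average_le hglip (x t ω) (x (t + 1) ω)
      _ ≤ Lg * (η * (Lg * Lf)) := by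
          rw [norm_sub_rev, hxrec]
          gcongr
          exact norm_proj_sub_le_of_gradient_step hXconv hproj hLf.le hLg.le hη.le (hflip _)
            (hglip _) (hX t ω) _
      _ = η * Lf * Lg ^ 2 := by ring
  let step (q : EuclideanSpace ℝ (Fin p) × EuclideanSpace ℝ (Fin d)) (ij : Fin n × Fin m) :=
    let y' := (1 - β) • q.2 + β • g ij.2 q.1
    (proj (q.1 - η • (fderiv ℝ (g ij.2) q.1).adjoint (gradient (f ij.1) y')), y')
  let z (t : ℕ) (ω : Ω) := (x t ω, y t ω)
  have hstep : ∀ t ω, z (t + 1) ω = step (z t ω) (I t ω, J t ω) :=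
    fun t ω => by simp only [z]; rw [hxrec, hyrec]
  have h0 : ∀ ω, z 0 ω = (x0, y0) := fun ω => by simp only [z]; rw [hxinit, hyinit]
  have hξ : ∀ t, Measurable fun ω => (I t ω, J t ω) := fun t => (hImeas t).prodMk (hJmeas t)
  have hmeas := measurable_of_history hξ h0 hstep
  have hfin := finite_range_of_history h0 hstep
  have hint := integrable_norm_sq_tracking_error (μ := μ) (gS := gS) hyrec hmeas hJmeas hfin
  have hrec := integral_norm_sq_tracking_error_succ_le
    (fun j => (LipschitzWith.of_dist_le' fun a b => by
      simpa [dist_eq_norm] using hglip j a b).continuous)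
    (by simpa using hgS) (by simpa using hVg) hβ0 hβ1.le hyrec hX hdrift hmeas hJmeas hfin
    (fun t => (indepFun_of_history hξ hiid h0 hstep t).comp measurable_id measurable_snd)
    (by simpa using hJunif)
  have hVg0 : 0 ≤ Vg := le_trans (by positivity) (hVg x0 hx0)
  have hbound := le_rpow_neg_mul_add_div_of_le_mul_add
    (D := fun t => ∫ ω, ‖y (t + 1) ω - gS (x t ω)‖ ^ 2 ∂μ) hβ0 hβ1.le (by positivity)
    (integral_nonneg fun _ => sq_nonneg _) hrec hc ht
  refine lintegral_nnnorm_sq_le_of_integral_le (by positivity) (hint 0) (hint t) (hbound.trans ?_)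
  have hC : ((η * Lf * Lg ^ 2) ^ 2 / β + β ^ 2 * Vg) / β =
      Lf ^ 2 * Lg ^ 4 * η ^ 2 / β ^ 2 + Vg * β := by
    field_simp
  linarith [mul_nonneg hVg0 hβ0.le]

/-- Tracking error of the moving-average sequence for SCGD:
for every `t ≥ 1` and every `c > 0`,
`E_A‖y_{t+1} − g_S(x_t)‖² ≤ (c/e)^c (tβ)^{−c} E_A‖y_1 − g_S(x_0)‖²
  + L_f² L_g⁴ η² β^{−2} + 2 V_g β`. -/
theorem stmt_13
    (p d n m : ℕ) (hp : 1 ≤ p) (hd : 1 ≤ d) (hn : 1 ≤ n) (hm : 1 ≤ m)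
    (X : Set (EuclideanSpace ℝ (Fin p)))
    (hXne : X.Nonempty) (hXcl : IsClosed X) (hXconv : Convex ℝ X)
    (proj : EuclideanSpace ℝ (Fin p) → EuclideanSpace ℝ (Fin p))
    (hproj : ∀ z, proj z ∈ X ∧ ∀ w ∈ X, dist (proj z) z ≤ dist w z)
    (f : Fin n → EuclideanSpace ℝ (Fin d) → ℝ)
    (g : Fin m → EuclideanSpace ℝ (Fin p) → EuclideanSpace ℝ (Fin d))
    (Lf Lg Vg η β : ℝ)
    (hLf : 0 < Lf) (hLg : 0 < Lg) (hη : 0 < η) (hβ0 : 0 < β) (hβ1 : β < 1)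
    (hfdiff : ∀ i, Differentiable ℝ (f i))
    (hgdiff : ∀ j, Differentiable ℝ (g j))
    (hflip : ∀ i y₁ y₂, |f i y₁ - f i y₂| ≤ Lf * ‖y₁ - y₂‖)
    (hglip : ∀ j x₁ x₂, ‖g j x₁ - g j x₂‖ ≤ Lg * ‖x₁ - x₂‖)
    (gS : EuclideanSpace ℝ (Fin p) → EuclideanSpace ℝ (Fin d))
    (hgS : ∀ z, gS z = (m : ℝ)⁻¹ • ∑ j, g j z)
    (hVg : ∀ z ∈ X, (m : ℝ)⁻¹ * ∑ j, ‖g j z - gS z‖ ^ 2 ≤ Vg)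
    -- random indices
    (Ω : Type) [MeasurableSpace Ω] (μ : Measure Ω) [IsProbabilityMeasure μ]
    (I : ℕ → Ω → Fin n) (J : ℕ → Ω → Fin m)
    (hImeas : ∀ t, Measurable (I t)) (hJmeas : ∀ t, Measurable (J t))
    (hIunif : ∀ t a, μ {ω | I t ω = a} = (n : ℝ≥0∞)⁻¹)
    (hJunif : ∀ t b, μ {ω | J t ω = b} = (m : ℝ≥0∞)⁻¹)
    (hiid : ProbabilityTheory.iIndepFun
      (fun t ω => (I t ω, J t ω)) μ)
    (hIJindep : ∀ t, ProbabilityTheory.IndepFun (I t) (J t) μ)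
    -- SCGD iterates
    (x0 : EuclideanSpace ℝ (Fin p)) (y0 : EuclideanSpace ℝ (Fin d)) (hx0 : x0 ∈ X)
    (x : ℕ → Ω → EuclideanSpace ℝ (Fin p)) (y : ℕ → Ω → EuclideanSpace ℝ (Fin d))
    (hxmeas : ∀ t, Measurable (x t)) (hymeas : ∀ t, Measurable (y t))
    (hxinit : ∀ ω, x 0 ω = x0) (hyinit : ∀ ω, y 0 ω = y0)
    (hyrec : ∀ t ω, y (t + 1) ω = (1 - β) • y t ω + β • g (J t ω) (x t ω))
    (hxrec : ∀ t ω, x (t + 1) ω = proj (x t ω - η •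
      (ContinuousLinearMap.adjoint (fderiv ℝ (g (J t ω)) (x t ω))
        (gradient (f (I t ω)) (y (t + 1) ω))))) :
    ∀ t : ℕ, 1 ≤ t → ∀ c : ℝ, 0 < c →
      ∫⁻ ω, (‖y (t + 1) ω - gS (x t ω)‖₊ : ℝ≥0∞) ^ 2 ∂μ ≤
        ENNReal.ofReal ((c / Real.exp 1) ^ c * ((t : ℝ) * β) ^ (-c)) *
            ∫⁻ ω, (‖y 1 ω - gS (x 0 ω)‖₊ : ℝ≥0∞) ^ 2 ∂μ +
          ENNReal.ofReal (Lf ^ 2 * Lg ^ 4 * η ^ 2 / β ^ 2 + 2 * Vg * β) :=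
  stmt_13_general p d n m hm X hXconv proj hproj f g Lf Lg Vg η β hLf hLg hη hβ0 hβ1 hflip hglip gS
    hgS hVg Ω μ I J hImeas hJmeas hJunif hiid x0 y0 hx0 x y hxinit hyinit hyrec hxrec
end

section
/- For the SCSC iterates, for every integer t ≥ 1 and every real c > 0, E_A‖y_{t+1} − g_S(x_t)‖² ≤ (c/e)^c · (tβ)^{−c} · E_A‖y_1 − g_S(x_0)‖² + L_f²·L_g⁴·η²·β^{−1} + 2·V_g·β. -/
/-!
The tracking error `e_t = E‖y_{t+1} - g_S(x_t)‖²` obeys `e_{t+1} ≤ (1-β)² e_t + σ`. Indeed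
`y_{t+2} - g_S(x_{t+1})` is `(1-β)(y_{t+1} - g_S(x_t))` plus a noise term which depends on the
fresh index `j_{t+1}` and averages to zero over it. The iteration is a recursion in the state
`(x_{t+1}, x_t, y_{t+1})` driven by the i.i.d. indices, so `j_{t+1}` is uniform and independent
of that state: the cross term vanishes in expectation, and the noise has second moment at most
`σ = 2β²V_g + 2(1-β)²δ²`, where `δ = L_g · η L_f L_g` bounds `‖g_j(x_{t+1}) - g_j(x_t)‖` because
the metric projection is nonexpansive. Since `C = δ²/β + 2V_gβ` satisfies `(1-β)²C + σ ≤ C`,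
unrolling gives `e_t ≤ (1-β)^{2t} e_0 + C`, and `(1-β)^{2t} ≤ e^{-tβ} ≤ (c/e)^c (tβ)^{-c}` because
`s ↦ s^c e^{-s}` is maximal at `s = c`.
-/

open MeasureTheory ProbabilityTheory Finset
open scoped ENNReal NNReal RealInnerProductSpace

namespace Real

theorem exp_neg_le_div_exp_one_rpow_mul_rpow_neg {c s : ℝ} (hc : 0 < c) (hs : 0 < s) :
    exp (-s) ≤ (c / exp 1) ^ c * s ^ (-c) := by
  have hrhs : (c / exp 1) ^ c * s ^ (-c) = exp (c * (log c - 1) - c * log s) := by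
    rw [rpow_def_of_pos (by positivity), rpow_def_of_pos hs, ← exp_add, log_div hc.ne'
      (exp_pos 1).ne', log_exp]
    ring_nf
  have hlog : log (s / c) ≤ s / c - 1 := log_le_sub_one_of_pos (by positivity)
  rw [log_div hs.ne' hc.ne'] at hlog
  have := mul_le_mul_of_nonneg_left hlog hc.le
  rw [mul_sub c (s / c), mul_div_cancel₀ s hc.ne'] at this
  rw [hrhs, exp_le_exp]
  nlinarith

theorem one_sub_sq_pow_le_exp_neg_mul {β : ℝ} (h0 : 0 ≤ β) (h1 : β ≤ 1) (t : ℕ) :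
    ((1 - β) ^ 2) ^ t ≤ exp (-(t * β)) := by
  have hsq : (1 - β) ^ 2 ≤ exp (-β) := by
    calc (1 - β) ^ 2 ≤ 1 - β := by nlinarith
      _ ≤ exp (-β) := one_sub_le_exp_neg β
  calc ((1 - β) ^ 2) ^ t ≤ exp (-β) ^ t := pow_le_pow_left₀ (sq_nonneg _) hsq t
    _ = exp (-(t * β)) := by rw [← exp_nat_mul]; ring_nf

end Real

theorem ENNReal.le_pow_mul_add_of_le_mul_add {u : ℕ → ℝ≥0∞} {a b C : ℝ≥0∞}
    (hC : a * C + b ≤ C) (hu : ∀ k, u (k + 1) ≤ a * u k + b) (t : ℕ) :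
    u t ≤ a ^ t * u 0 + C := by
  induction t with
  | zero => simp
  | succ k ih =>
    calc u (k + 1) ≤ a * (a ^ k * u 0 + C) + b := (hu k).trans (by gcongr)
      _ = a ^ (k + 1) * u 0 + (a * C + b) := by ring
      _ ≤ a ^ (k + 1) * u 0 + C := by gcongr

theorem norm_add_sq_le_two_mul {F : Type*} [SeminormedAddCommGroup F] (a b : F) :
    ‖a + b‖ ^ 2 ≤ 2 * ‖a‖ ^ 2 + 2 * ‖b‖ ^ 2 := by
  nlinarith [norm_add_le a b, norm_nonneg (a + b), add_sq_le (a := ‖a‖) (b := ‖b‖)]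

section InnerProductSpace

variable {F : Type*} [NormedAddCommGroup F] [InnerProductSpace ℝ F]

theorem sum_norm_add_sq_of_sum_eq_zero {ι : Type*} (s : Finset ι) (a : F) {ζ : ι → F}
    (hζ : ∑ b ∈ s, ζ b = 0) :
    ∑ b ∈ s, ‖a + ζ b‖ ^ 2 = #s * ‖a‖ ^ 2 + ∑ b ∈ s, ‖ζ b‖ ^ 2 := by
  simp_rw [norm_add_sq_real, sum_add_distrib, ← mul_sum, ← inner_sum, hζ]
  simp

theorem sum_norm_sub_average_sq_le {ι : Type*} [Fintype ι] (w : ι → F) :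
    ∑ b, ‖w b - (Fintype.card ι : ℝ)⁻¹ • ∑ c, w c‖ ^ 2 ≤ ∑ b, ‖w b‖ ^ 2 := by
  rcases isEmpty_or_nonempty ι with _ | _
  · simp
  set avg := (Fintype.card ι : ℝ)⁻¹ • ∑ c, w c
  have hζ : ∑ b, (w b - avg) = 0 := by
    rw [sum_sub_distrib, sum_const, card_univ, ← Nat.cast_smul_eq_nsmul ℝ, smul_smul,
      mul_inv_cancel₀ (by positivity), one_smul, sub_self]
  have := sum_norm_add_sq_of_sum_eq_zero univ avg hζ
  simp only [add_sub_cancel] at this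
  rw [this]
  exact le_add_of_nonneg_left (by positivity)

theorem inner_sub_le_zero_of_forall_dist_le {X : Set F} (hX : Convex ℝ X) {u p : F}
    (hp : p ∈ X) (hmin : ∀ w ∈ X, dist p u ≤ dist w u) {w : F} (hw : w ∈ X) :
    ⟪u - p, w - p⟫ ≤ 0 := by
  have : Nonempty X := ⟨⟨p, hp⟩⟩
  refine (norm_eq_iInf_iff_real_inner_le_zero hX hp).1 (le_antisymm ?_ ?_) w hw
  · refine le_ciInf fun v => ?_
    simpa only [dist_comm _ u, dist_eq_norm] using hmin v v.2
  · exact ciInf_le ⟨0, fun r ⟨v, hv⟩ => hv ▸ norm_nonneg _⟩ (⟨p, hp⟩ : X)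

variable {X : Set F} {proj : F → F}

theorem lipschitzWith_one_of_forall_dist_le (hX : Convex ℝ X)
    (hproj : ∀ z, proj z ∈ X ∧ ∀ w ∈ X, dist (proj z) z ≤ dist w z) :
    LipschitzWith 1 proj := by
  refine LipschitzWith.of_dist_le_mul fun a b => ?_
  rw [NNReal.coe_one, one_mul, dist_eq_norm, dist_eq_norm]
  have ha := inner_sub_le_zero_of_forall_dist_le hX (hproj a).1 (hproj a).2 (hproj b).1
  have hb := inner_sub_le_zero_of_forall_dist_le hX (hproj b).1 (hproj b).2 (hproj a).1
  -- the two variational inequalities add up to `‖Pa - Pb‖² ≤ ⟪a - b, Pa - Pb⟫`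
  have key : ‖proj a - proj b‖ ^ 2 ≤ ⟪a - b, proj a - proj b⟫ := by
    have : ⟪a - b, proj a - proj b⟫ = ‖proj a - proj b‖ ^ 2
        - ⟪a - proj a, proj b - proj a⟫ - ⟪b - proj b, proj a - proj b⟫ := by
      rw [← real_inner_self_eq_norm_sq]
      simp only [inner_sub_left, inner_sub_right, real_inner_comm]
      ring
    linarith
  nlinarith [real_inner_le_norm (a - b) (proj a - proj b), norm_nonneg (proj a - proj b),
    norm_nonneg (a - b)]

theorem norm_sub_le_of_forall_dist_le (hX : Convex ℝ X)
    (hproj : ∀ z, proj z ∈ X ∧ ∀ w ∈ X, dist (proj z) z ≤ dist w z) (u : F) {w : F}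
    (hw : w ∈ X) : ‖proj u - w‖ ≤ ‖u - w‖ := by
  have hfix : proj w = w := dist_le_zero.1 (by simpa using (hproj w).2 w hw)
  simpa [hfix, dist_eq_norm] using (lipschitzWith_one_of_forall_dist_le hX hproj).dist_le_mul u w

theorem norm_gradient_le_of_lipschitzWith [CompleteSpace F] {f : F → ℝ} {C : ℝ≥0}
    (hf : LipschitzWith C f) (z : F) : ‖gradient f z‖ ≤ C := by
  rw [gradient, LinearIsometryEquiv.norm_map]
  exact norm_fderiv_le_of_lipschitz ℝ hf

end InnerProductSpace

section Recursion

variable {Ω S E : Type*} {mΩ : MeasurableSpace Ω} [MeasurableSpace S] [mE : MeasurableSpace E]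
  {ξ : ℕ → Ω → E} {F : S → E → S} {s : ℕ → Ω → S} {s₀ : S}

theorem measurable_biSup_comap_of_recursion (hF : Measurable (Function.uncurry F))
    (h0 : ∀ ω, s 0 ω = s₀) (hs : ∀ t ω, s (t + 1) ω = F (s t ω) (ξ t ω)) (t : ℕ) :
    Measurable[⨆ r ∈ Set.Iio t, mE.comap (ξ r)] (s t) := by
  induction t with
  | zero => simp [show s 0 = fun _ => s₀ from funext h0]
  | succ k ih =>
    have hmono : (⨆ r ∈ Set.Iio k, mE.comap (ξ r)) ≤ ⨆ r ∈ Set.Iio (k + 1), mE.comap (ξ r) :=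
      biSup_mono fun r hr => Nat.lt_succ_of_lt hr
    have hξ : Measurable[⨆ r ∈ Set.Iio (k + 1), mE.comap (ξ r)] (ξ k) :=
      (comap_measurable (ξ k)).mono (le_biSup (fun r => mE.comap (ξ r)) (Nat.lt_succ_self k)) le_rfl
    rw [show s (k + 1) = fun ω => Function.uncurry F (s k ω, ξ k ω) from funext (hs k)]
    exact hF.comp ((ih.mono hmono le_rfl).prodMk hξ)

theorem measurable_of_recursion (hξ : ∀ t, Measurable (ξ t)) (hF : Measurable (Function.uncurry F))
    (h0 : ∀ ω, s 0 ω = s₀) (hs : ∀ t ω, s (t + 1) ω = F (s t ω) (ξ t ω)) (t : ℕ) :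
    Measurable (s t) :=
  (measurable_biSup_comap_of_recursion hF h0 hs t).mono
    (iSup₂_le fun r _ => (hξ r).comap_le) le_rfl

theorem ProbabilityTheory.iIndepFun.indepFun_of_recursion {μ : Measure Ω} (hind : iIndepFun ξ μ)
    (hξ : ∀ t, Measurable (ξ t)) (hF : Measurable (Function.uncurry F))
    (h0 : ∀ ω, s 0 ω = s₀) (hs : ∀ t ω, s (t + 1) ω = F (s t ω) (ξ t ω)) (t : ℕ) :
    IndepFun (s t) (ξ t) μ := by
  rw [IndepFun_iff_Indep]
  refine indep_of_indep_of_le_right (indep_of_indep_of_le_left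
    (indep_biSup_compl (fun r => (hξ r).comap_le) hind.iIndep (Set.Iio t))
    (measurable_biSup_comap_of_recursion hF h0 hs t).comap_le) ?_
  exact le_biSup (fun r => mE.comap (ξ r)) (by simp : t ∈ (Set.Iio t)ᶜ)

end Recursion

section IndependentIndex

variable {Ω S ι : Type*} {mΩ : MeasurableSpace Ω} [MeasurableSpace S] {μ : Measure Ω}
  [Fintype ι] [MeasurableSpace ι] [MeasurableSingletonClass ι]
  {W : Ω → S} {J : Ω → ι} {Φ : ι → S → ℝ≥0∞}

theorem lintegral_comp_eq_sum_of_indepFun (hW : Measurable W) (hJ : Measurable J)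
    (hWJ : IndepFun W J μ) (hΦ : ∀ b, Measurable (Φ b)) :
    ∫⁻ ω, Φ (J ω) (W ω) ∂μ = ∑ b, μ (J ⁻¹' {b}) * ∫⁻ ω, Φ b (W ω) ∂μ := by
  have hsplit : ∀ ω, Φ (J ω) (W ω) = ∑ b, (J ⁻¹' {b}).indicator 1 ω * Φ b (W ω) := by
    intro ω
    rw [sum_eq_single (J ω) (fun b _ hb => by simp [Ne.symm hb]) (by simp)]
    simp
  have hind : ∀ b, (J ⁻¹' {b}).indicator (1 : Ω → ℝ≥0∞) = ({b} : Set ι).indicator 1 ∘ J :=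
    fun b => rfl
  simp_rw [hsplit]
  rw [lintegral_finsetSum (f := fun b ω => (J ⁻¹' {b}).indicator 1 ω * Φ b (W ω)) _
    fun b _ => (measurable_one.indicator (hJ (measurableSet_singleton b))).mul ((hΦ b).comp hW)]
  refine sum_congr rfl fun b _ => ?_
  rw [← lintegral_indicator_one (hJ (measurableSet_singleton b)), hind]
  exact lintegral_mul_eq_lintegral_mul_lintegral_of_indepFun
    (measurable_one.indicator (measurableSet_singleton b) |>.comp hJ) ((hΦ b).comp hW)
    (hWJ.symm.comp (measurable_one.indicator (measurableSet_singleton b)) (hΦ b))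

theorem lintegral_comp_le_of_sum_le [Nonempty ι] (hW : Measurable W) (hJ : Measurable J)
    (hWJ : IndepFun W J μ) (hunif : ∀ b, μ (J ⁻¹' {b}) = (Fintype.card ι : ℝ≥0∞)⁻¹)
    (hΦ : ∀ b, Measurable (Φ b)) {Ψ : Ω → ℝ≥0∞}
    (hΦΨ : ∀ ω, ∑ b, Φ b (W ω) ≤ Fintype.card ι * Ψ ω) :
    ∫⁻ ω, Φ (J ω) (W ω) ∂μ ≤ ∫⁻ ω, Ψ ω ∂μ := by
  have hcard : (Fintype.card ι : ℝ≥0∞) ≠ 0 := by simp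
  calc ∫⁻ ω, Φ (J ω) (W ω) ∂μ
      = (Fintype.card ι : ℝ≥0∞)⁻¹ * ∫⁻ ω, ∑ b, Φ b (W ω) ∂μ := by
        rw [lintegral_comp_eq_sum_of_indepFun hW hJ hWJ hΦ, lintegral_finsetSum
          (f := fun b ω => Φ b (W ω)) _ fun b _ => (hΦ b).comp hW, mul_sum]
        simp only [hunif]
    _ ≤ (Fintype.card ι : ℝ≥0∞)⁻¹ * ∫⁻ ω, Fintype.card ι * Ψ ω ∂μ := by
        gcongr with ω; exact hΦΨ ω
    _ = ∫⁻ ω, Ψ ω ∂μ := by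
        rw [lintegral_const_mul' _ _ (ENNReal.natCast_ne_top _), ← mul_assoc,
          ENNReal.inv_mul_cancel hcard (ENNReal.natCast_ne_top _), one_mul]

end IndependentIndex

section MovingAverage

variable {E F : Type*} [NormedAddCommGroup F] [InnerProductSpace ℝ F] {m : ℕ}
  {g : Fin m → E → F} {gS : E → F}

theorem sum_sub_average_eq_zero_s14 (hgS : ∀ z, gS z = (m : ℝ)⁻¹ • ∑ j, g j z) (z : E) :
    ∑ j, (g j z - gS z) = 0 := by
  obtain rfl | hm := eq_or_ne m 0
  · simp
  rw [sum_sub_distrib, sum_const, card_univ, Fintype.card_fin, ← Nat.cast_smul_eq_nsmul ℝ, hgS,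
    smul_smul, mul_inv_cancel₀ (by exact_mod_cast hm), one_smul, sub_self]

theorem sum_norm_moving_average_sub_le (hgS : ∀ z, gS z = (m : ℝ)⁻¹ • ∑ j, g j z) (β : ℝ)
    (x x' : E) (y : F) {V δ : ℝ} (hV : (m : ℝ)⁻¹ * ∑ j, ‖g j x' - gS x'‖ ^ 2 ≤ V)
    (hδ : ∀ j, ‖g j x' - g j x‖ ≤ δ) :
    ∑ j, ‖(1 - β) • (y + g j x' - g j x) + β • g j x' - gS x'‖ ^ 2 ≤
      m * ((1 - β) ^ 2 * ‖y - gS x‖ ^ 2 + (2 * β ^ 2 * V + 2 * (1 - β) ^ 2 * δ ^ 2)) := by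
  obtain rfl | hm := eq_or_ne m 0
  · simp
  have hm' : (0 : ℝ) < m := by positivity
  set u : Fin m → F := fun j => g j x' - gS x'
  set v : Fin m → F := fun j => (g j x' - g j x) - (gS x' - gS x)
  have hsplit : ∀ j, (1 - β) • (y + g j x' - g j x) + β • g j x' - gS x'
      = (1 - β) • (y - gS x) + (β • u j + (1 - β) • v j) := fun j => by simp only [u, v]; module
  have hcentred : ∑ j, (β • u j + (1 - β) • v j) = 0 := by
    have hv' : v = fun j => (g j x' - gS x') - (g j x - gS x) := by ext1 j; simp only [v]; abel
    simp only [sum_add_distrib, ← smul_sum, hv', sum_sub_distrib, u,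
      sum_sub_average_eq_zero_s14 hgS, sub_zero, smul_zero, add_zero]
  have hu : ∑ j, ‖u j‖ ^ 2 ≤ m * V := by
    rwa [← inv_mul_le_iff₀ hm']
  have hv : ∑ j, ‖v j‖ ^ 2 ≤ m * δ ^ 2 := by
    have hmean : gS x' - gS x = (Fintype.card (Fin m) : ℝ)⁻¹ • ∑ j, (g j x' - g j x) := by
      rw [Fintype.card_fin, sum_sub_distrib, smul_sub, ← hgS, ← hgS]
    calc ∑ j, ‖v j‖ ^ 2 ≤ ∑ j, ‖g j x' - g j x‖ ^ 2 := by
          simp only [v, hmean]; exact sum_norm_sub_average_sq_le _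
      _ ≤ ∑ _j : Fin m, δ ^ 2 :=
          sum_le_sum fun j _ => pow_le_pow_left₀ (norm_nonneg _) (hδ j) 2
      _ = m * δ ^ 2 := by simp
  have hnoise : ∀ j, ‖β • u j + (1 - β) • v j‖ ^ 2
      ≤ 2 * β ^ 2 * ‖u j‖ ^ 2 + 2 * (1 - β) ^ 2 * ‖v j‖ ^ 2 := fun j => by
    have := norm_add_sq_le_two_mul (β • u j) ((1 - β) • v j)
    rwa [norm_smul, norm_smul, mul_pow, mul_pow, Real.norm_eq_abs, Real.norm_eq_abs, sq_abs,
      sq_abs, ← mul_assoc, ← mul_assoc] at this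
  simp_rw [hsplit]
  rw [sum_norm_add_sq_of_sum_eq_zero _ _ hcentred, card_univ, Fintype.card_fin, norm_smul,
    mul_pow, Real.norm_eq_abs, sq_abs]
  have := sum_le_sum fun j (_ : j ∈ univ) => hnoise j
  rw [sum_add_distrib, ← mul_sum, ← mul_sum] at this
  nlinarith [sq_nonneg β, sq_nonneg (1 - β)]

end MovingAverage

theorem lintegral_tracking_error_step_le {Ω E F : Type*} {mΩ : MeasurableSpace Ω}
    {μ : Measure Ω} [IsProbabilityMeasure μ] [MeasurableSpace E] [NormedAddCommGroup F]
    [InnerProductSpace ℝ F] [MeasurableSpace F] [BorelSpace F] [SecondCountableTopology F]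
    {m : ℕ} [NeZero m] {g : Fin m → E → F} {gS : E → F}
    (hgS : ∀ z, gS z = (m : ℝ)⁻¹ • ∑ j, g j z) (hg : ∀ j, Measurable (g j))
    {W : Ω → E × E × F} {J : Ω → Fin m} (hW : Measurable W) (hJ : Measurable J)
    (hWJ : IndepFun W J μ) (hunif : ∀ b, μ (J ⁻¹' {b}) = (m : ℝ≥0∞)⁻¹) (β : ℝ) {V δ : ℝ}
    (hV : ∀ ω, (m : ℝ)⁻¹ * ∑ j, ‖g j (W ω).1 - gS (W ω).1‖ ^ 2 ≤ V)
    (hδ : ∀ ω j, ‖g j (W ω).1 - g j (W ω).2.1‖ ≤ δ) :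
    ∫⁻ ω, ‖(1 - β) • ((W ω).2.2 + g (J ω) (W ω).1 - g (J ω) (W ω).2.1) + β • g (J ω) (W ω).1
        - gS (W ω).1‖ₑ ^ 2 ∂μ
      ≤ ENNReal.ofReal ((1 - β) ^ 2) * ∫⁻ ω, ‖(W ω).2.2 - gS (W ω).2.1‖ₑ ^ 2 ∂μ
        + ENNReal.ofReal (2 * β ^ 2 * V + 2 * (1 - β) ^ 2 * δ ^ 2) := by
  have hgSm : Measurable gS := by
    rw [show gS = fun z => (m : ℝ)⁻¹ • ∑ j, g j z from funext hgS]
    fun_prop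
  set q := (1 - β) ^ 2
  set σ := 2 * β ^ 2 * V + 2 * (1 - β) ^ 2 * δ ^ 2
  refine (lintegral_comp_le_of_sum_le
    (Φ := fun j w => ‖(1 - β) • (w.2.2 + g j w.1 - g j w.2.1) + β • g j w.1 - gS w.1‖ₑ ^ 2)
    (Ψ := fun ω => ENNReal.ofReal q * ‖(W ω).2.2 - gS (W ω).2.1‖ₑ ^ 2 + ENNReal.ofReal σ)
    hW hJ hWJ (by simpa using hunif) (fun j => by have := hg j; fun_prop) fun ω => ?_).trans ?_
  · have hσ : 0 ≤ σ := by
      have : 0 ≤ V := (by positivity : (0 : ℝ) ≤ _).trans (hV ω)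
      positivity
    have := sum_norm_moving_average_sub_le hgS β (W ω).2.1 (W ω).1 (W ω).2.2 (hV ω) (hδ ω)
    simp only [← ofReal_norm, ← ENNReal.ofReal_pow (norm_nonneg _)]
    rw [← ENNReal.ofReal_sum_of_nonneg fun j _ => by positivity,
      ← ENNReal.ofReal_mul (by positivity), ← ENNReal.ofReal_add (by positivity) hσ,
      ← ENNReal.ofReal_natCast, ← ENNReal.ofReal_mul (by positivity), Fintype.card_fin]
    exact ENNReal.ofReal_le_ofReal this
  · rw [lintegral_add_right _ measurable_const, lintegral_const_mul' _ _ ENNReal.ofReal_ne_top,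
      lintegral_const, measure_univ, mul_one]

theorem tracking_bound_fixed_point_le {β V D : ℝ} (hβ0 : 0 < β) (hβ1 : β ≤ 1) (hV : 0 ≤ V)
    (hD : 0 ≤ D) :
    (1 - β) ^ 2 * (D / β + 2 * V * β) + (2 * β ^ 2 * V + 2 * (1 - β) ^ 2 * D)
      ≤ D / β + 2 * V * β := by
  have hDβ : D / β * β = D := div_mul_cancel₀ D hβ0.ne'
  nlinarith [mul_nonneg (div_nonneg hD hβ0.le) (mul_nonneg hβ0.le hβ0.le),
    mul_nonneg (mul_nonneg hD hβ0.le) (by linarith : (0:ℝ) ≤ 3 - 2 * β),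
    mul_nonneg (mul_nonneg hV hβ0.le) (mul_nonneg hβ0.le (by linarith : (0:ℝ) ≤ 1 - β))]

theorem le_of_moving_average_recursion {u : ℕ → ℝ≥0∞} {β V D : ℝ} (hβ0 : 0 < β) (hβ1 : β ≤ 1)
    (hV : 0 ≤ V) (hD : 0 ≤ D) (hu : ∀ k, u (k + 1) ≤ ENNReal.ofReal ((1 - β) ^ 2) * u k
      + ENNReal.ofReal (2 * β ^ 2 * V + 2 * (1 - β) ^ 2 * D)) {t : ℕ} (ht : 1 ≤ t) {c : ℝ}
    (hc : 0 < c) :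
    u t ≤ ENNReal.ofReal ((c / Real.exp 1) ^ c * ((t : ℝ) * β) ^ (-c)) * u 0
      + ENNReal.ofReal (D / β + 2 * V * β) := by
  have hfix : ENNReal.ofReal ((1 - β) ^ 2) * ENNReal.ofReal (D / β + 2 * V * β)
      + ENNReal.ofReal (2 * β ^ 2 * V + 2 * (1 - β) ^ 2 * D)
      ≤ ENNReal.ofReal (D / β + 2 * V * β) := by
    rw [← ENNReal.ofReal_mul (by positivity), ← ENNReal.ofReal_add (by positivity) (by positivity)]
    exact ENNReal.ofReal_le_ofReal (tracking_bound_fixed_point_le hβ0 hβ1 hV hD)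
  have hcontr : ((1 - β) ^ 2) ^ t ≤ (c / Real.exp 1) ^ c * ((t : ℝ) * β) ^ (-c) :=
    (Real.one_sub_sq_pow_le_exp_neg_mul hβ0.le hβ1 t).trans
      (Real.exp_neg_le_div_exp_one_rpow_mul_rpow_neg hc (mul_pos (by exact_mod_cast ht) hβ0))
  calc u t ≤ ENNReal.ofReal ((1 - β) ^ 2) ^ t * u 0 + ENNReal.ofReal (D / β + 2 * V * β) :=
        ENNReal.le_pow_mul_add_of_le_mul_add hfix hu t
    _ ≤ _ := by
        rw [← ENNReal.ofReal_pow (by positivity)]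
        gcongr

section SCSC

variable {E F ι κ : Type*} [NormedAddCommGroup E] [InnerProductSpace ℝ E] [CompleteSpace E]
  [NormedAddCommGroup F] [InnerProductSpace ℝ F] [CompleteSpace F]

/-- One SCSC iteration acting on the state `(x_t, x_{t-1}, y_t)` with sampled indices `(i, j)`;
the previous iterate is part of the state because of the correction term in the `y`-update. -/
noncomputable def scscStep (proj : E → E) (f : ι → F → ℝ) (g : κ → E → F) (η β : ℝ)
    (w : E × E × F) (ξ : ι × κ) : E × E × F :=
  let y := (1 - β) • (w.2.2 + g ξ.2 w.1 - g ξ.2 w.2.1) + β • g ξ.2 w.1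
  (proj (w.1 - η • ContinuousLinearMap.adjoint (fderiv ℝ (g ξ.2) w.1) (gradient (f ξ.1) y)),
    w.1, y)

theorem measurable_scscStep [FiniteDimensional ℝ E] [FiniteDimensional ℝ F]
    [MeasurableSpace E] [BorelSpace E] [MeasurableSpace F] [BorelSpace F]
    [Countable ι] [MeasurableSpace ι] [MeasurableSingletonClass ι]
    [Countable κ] [MeasurableSpace κ] [MeasurableSingletonClass κ]
    {proj : E → E} (hproj : Continuous proj) (f : ι → F → ℝ) {g : κ → E → F}
    (hg : ∀ j, Continuous (g j)) (η β : ℝ) :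
    Measurable (Function.uncurry (scscStep proj f g η β)) := by
  refine measurable_from_prod_countable_left fun ξ => ?_
  have hy : Measurable fun w : E × E × F =>
      (1 - β) • (w.2.2 + g ξ.2 w.1 - g ξ.2 w.2.1) + β • g ξ.2 w.1 := by
    have := (hg ξ.2).measurable
    fun_prop
  have hgrad : Measurable (gradient (f ξ.1)) :=
    (InnerProductSpace.toDual ℝ F).symm.continuous.measurable.comp (measurable_fderiv ℝ _)
  have hadj : Continuous fun A : (E →L[ℝ] F) × F => ContinuousLinearMap.adjoint A.1 A.2 :=
    have h : Continuous fun A : E →L[ℝ] F => (ContinuousLinearMap.adjoint A : F →L[ℝ] E) :=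
      ContinuousLinearMap.adjoint.continuous
    isBoundedBilinearMap_apply.continuous.comp ((h.comp continuous_fst).prodMk continuous_snd)
  exact (hproj.measurable.comp (measurable_fst.sub ((hadj.measurable.comp
    (((measurable_fderiv ℝ (g ξ.2)).comp measurable_fst).prodMk (hgrad.comp hy))).const_smul η))
    ).prodMk (measurable_fst.prodMk hy)

theorem measurable_scsc_state_and_indepFun {Ω : Type*} {mΩ : MeasurableSpace Ω}
    {μ : Measure Ω} [FiniteDimensional ℝ E] [FiniteDimensional ℝ F]
    [MeasurableSpace E] [BorelSpace E] [MeasurableSpace F] [BorelSpace F]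
    [Countable ι] [MeasurableSpace ι] [MeasurableSingletonClass ι]
    [Countable κ] [MeasurableSpace κ] [MeasurableSingletonClass κ]
    {proj : E → E} (hproj : Continuous proj) (f : ι → F → ℝ) {g : κ → E → F}
    (hg : ∀ j, Continuous (g j)) {η β : ℝ} {I : ℕ → Ω → ι} {J : ℕ → Ω → κ}
    (hI : ∀ t, Measurable (I t)) (hJ : ∀ t, Measurable (J t))
    (hiid : iIndepFun (fun t ω => (I t ω, J t ω)) μ) {x : ℕ → Ω → E} {y : ℕ → Ω → F}
    {x₀ : E} {y₀ : F} (hxinit : ∀ ω, x 0 ω = x₀) (hyinit : ∀ ω, y 0 ω = y₀)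
    (hyrec : ∀ t ω, y (t + 1) ω = (1 - β) • (y t ω + g (J t ω) (x t ω) - g (J t ω) (x (t - 1) ω))
      + β • g (J t ω) (x t ω))
    (hxrec : ∀ t ω, x (t + 1) ω = proj (x t ω - η •
      ContinuousLinearMap.adjoint (fderiv ℝ (g (J t ω)) (x t ω))
        (gradient (f (I t ω)) (y (t + 1) ω))))
    (t : ℕ) :
    Measurable (fun ω => (x t ω, x (t - 1) ω, y t ω))
      ∧ IndepFun (fun ω => (x t ω, x (t - 1) ω, y t ω)) (J t) μ := by
  set s : ℕ → Ω → E × E × F := fun t ω => (x t ω, x (t - 1) ω, y t ω)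
  have hξ : ∀ t, Measurable fun ω => (I t ω, J t ω) := fun t => (hI t).prodMk (hJ t)
  have hF := measurable_scscStep hproj f hg η β
  have hs : ∀ t ω, s (t + 1) ω = scscStep proj f g η β (s t ω) (I t ω, J t ω) := fun t ω => by
    simp only [s, scscStep, hxrec, hyrec, Nat.add_sub_cancel]
  have hs0 : ∀ ω, s 0 ω = (x₀, x₀, y₀) := fun ω => by simp [s, hxinit, hyinit]
  exact ⟨measurable_of_recursion hξ hF hs0 hs t,
    (hiid.indepFun_of_recursion hξ hF hs0 hs t).comp measurable_id measurable_snd⟩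

theorem norm_proj_gradient_step_sub_le {X : Set E} (hX : Convex ℝ X) {proj : E → E}
    (hproj : ∀ z, proj z ∈ X ∧ ∀ w ∈ X, dist (proj z) z ≤ dist w z) {x : E} (hx : x ∈ X)
    {η : ℝ} (hη : 0 ≤ η) {g : E → F} {Lg : ℝ≥0} (hg : LipschitzWith Lg g) {f : F → ℝ}
    {Lf : ℝ≥0} (hf : LipschitzWith Lf f) (y : F) :
    ‖proj (x - η • ContinuousLinearMap.adjoint (fderiv ℝ g x) (gradient f y)) - x‖
      ≤ η * (Lg * Lf) := by
  set A := fderiv ℝ g x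
  calc ‖proj (x - η • ContinuousLinearMap.adjoint A (gradient f y)) - x‖
      ≤ ‖x - η • ContinuousLinearMap.adjoint A (gradient f y) - x‖ :=
        norm_sub_le_of_forall_dist_le hX hproj _ hx
    _ = η * ‖ContinuousLinearMap.adjoint A (gradient f y)‖ := by
        rw [sub_sub_cancel_left, norm_neg, norm_smul, Real.norm_of_nonneg hη]
    _ ≤ η * (‖A‖ * ‖gradient f y‖) := by
        gcongr
        simpa only [LinearIsometryEquiv.norm_map] using
          (ContinuousLinearMap.adjoint A).le_opNorm (gradient f y)
    _ ≤ η * (Lg * Lf) := by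
        gcongr
        · exact norm_fderiv_le_of_lipschitz ℝ hg
        · exact norm_gradient_le_of_lipschitzWith hf y

end SCSC

theorem stmt_14_general
    (p d n m : ℕ) (hm : 1 ≤ m)
    (X : Set (EuclideanSpace ℝ (Fin p)))
    (hXconv : Convex ℝ X)
    (proj : EuclideanSpace ℝ (Fin p) → EuclideanSpace ℝ (Fin p))
    (hproj : ∀ z, proj z ∈ X ∧ ∀ w ∈ X, dist (proj z) z ≤ dist w z)
    (f : Fin n → EuclideanSpace ℝ (Fin d) → ℝ)
    (g : Fin m → EuclideanSpace ℝ (Fin p) → EuclideanSpace ℝ (Fin d))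
    (Lf Lg Vg η β : ℝ)
    (hLf : 0 < Lf) (hLg : 0 < Lg) (hη : 0 < η) (hβ0 : 0 < β) (hβ1 : β < 1)
    (hflip : ∀ i y₁ y₂, |f i y₁ - f i y₂| ≤ Lf * ‖y₁ - y₂‖)
    (hglip : ∀ j x₁ x₂, ‖g j x₁ - g j x₂‖ ≤ Lg * ‖x₁ - x₂‖)
    (gS : EuclideanSpace ℝ (Fin p) → EuclideanSpace ℝ (Fin d))
    (hgS : ∀ z, gS z = (m : ℝ)⁻¹ • ∑ j, g j z)
    (hVg : ∀ z ∈ X, (m : ℝ)⁻¹ * ∑ j, ‖g j z - gS z‖ ^ 2 ≤ Vg)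
    -- random indices
    (Ω : Type) [MeasurableSpace Ω] (μ : Measure Ω) [IsProbabilityMeasure μ]
    (I : ℕ → Ω → Fin n) (J : ℕ → Ω → Fin m)
    (hImeas : ∀ t, Measurable (I t)) (hJmeas : ∀ t, Measurable (J t))
    (hJunif : ∀ t b, μ {ω | J t ω = b} = (m : ℝ≥0∞)⁻¹)
    (hiid : ProbabilityTheory.iIndepFun
      (fun t ω => (I t ω, J t ω)) μ)
    -- SCGD iterates
    (x0 : EuclideanSpace ℝ (Fin p)) (y0 : EuclideanSpace ℝ (Fin d)) (hx0 : x0 ∈ X)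
    (x : ℕ → Ω → EuclideanSpace ℝ (Fin p)) (y : ℕ → Ω → EuclideanSpace ℝ (Fin d))
    (hxinit : ∀ ω, x 0 ω = x0) (hyinit : ∀ ω, y 0 ω = y0)
    (hyrec : ∀ t ω, y (t + 1) ω = (1 - β) • (y t ω + g (J t ω) (x t ω) - g (J t ω) (x (t - 1) ω)) + β • g (J t ω) (x t ω))
    (hxrec : ∀ t ω, x (t + 1) ω = proj (x t ω - η •
      (ContinuousLinearMap.adjoint (fderiv ℝ (g (J t ω)) (x t ω))
        (gradient (f (I t ω)) (y (t + 1) ω))))) :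
    ∀ t : ℕ, 1 ≤ t → ∀ c : ℝ, 0 < c →
      ∫⁻ ω, (‖y (t + 1) ω - gS (x t ω)‖₊ : ℝ≥0∞) ^ 2 ∂μ ≤
        ENNReal.ofReal ((c / Real.exp 1) ^ c * ((t : ℝ) * β) ^ (-c)) *
            ∫⁻ ω, (‖y 1 ω - gS (x 0 ω)‖₊ : ℝ≥0∞) ^ 2 ∂μ +
          ENNReal.ofReal (Lf ^ 2 * Lg ^ 4 * η ^ 2 / β + 2 * Vg * β) := by
  intro t ht c hc
  have : NeZero m := ⟨by omega⟩
  have hgL : ∀ j, LipschitzWith Lg.toNNReal (g j) := fun j =>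
    LipschitzWith.of_dist_le' fun a b => by simpa only [dist_eq_norm] using hglip j a b
  have hfL : ∀ i, LipschitzWith Lf.toNNReal (f i) := fun i =>
    LipschitzWith.of_dist_le' fun a b => by
      simpa only [dist_eq_norm, Real.norm_eq_abs] using hflip i a b
  have hXmem : ∀ k ω, x k ω ∈ X := fun k ω => by
    cases k with
    | zero => rw [hxinit]; exact hx0
    | succ k => rw [hxrec]; exact (hproj _).1
  set δ := Lg * (η * (Lg * Lf))
  have hδ : ∀ k ω j, ‖g j (x (k + 1) ω) - g j (x k ω)‖ ≤ δ := fun k ω j => by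
    have := norm_proj_gradient_step_sub_le hXconv hproj (hXmem k ω) hη.le (hgL (J k ω))
      (hfL (I k ω)) (y (k + 1) ω)
    rw [Real.coe_toNNReal _ hLg.le, Real.coe_toNNReal _ hLf.le, ← hxrec] at this
    exact (hglip j _ _).trans (mul_le_mul_of_nonneg_left this hLg.le)
  have hstate := measurable_scsc_state_and_indepFun
    (lipschitzWith_one_of_forall_dist_le hXconv hproj).continuous f (fun j => (hgL j).continuous)
    hImeas hJmeas hiid hxinit hyinit hyrec hxrec
  set e : ℕ → ℝ≥0∞ := fun k => ∫⁻ ω, ‖y (k + 1) ω - gS (x k ω)‖ₑ ^ 2 ∂μ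
  have hrec : ∀ k, e (k + 1) ≤ ENNReal.ofReal ((1 - β) ^ 2) * e k
      + ENNReal.ofReal (2 * β ^ 2 * Vg + 2 * (1 - β) ^ 2 * δ ^ 2) := fun k => by
    have := lintegral_tracking_error_step_le hgS (fun j => (hgL j).continuous.measurable)
      (hstate (k + 1)).1 (hJmeas (k + 1)) (hstate (k + 1)).2 (hJunif (k + 1)) β
      (fun ω => hVg _ (hXmem (k + 1) ω)) (hδ k)
    simpa only [e, hyrec, Nat.add_sub_cancel] using this
  have hVg0 : 0 ≤ Vg := (by positivity : (0 : ℝ) ≤ _).trans (hVg x0 hx0)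
  have key := le_of_moving_average_recursion hβ0 hβ1.le hVg0 (sq_nonneg δ) hrec ht hc
  rwa [show δ ^ 2 = Lf ^ 2 * Lg ^ 4 * η ^ 2 by ring] at key

/-- Tracking error of the moving-average sequence for SCSC:
for every `t ≥ 1` and every `c > 0`,
`E_A‖y_{t+1} − g_S(x_t)‖² ≤ (c/e)^c (tβ)^{−c} E_A‖y_1 − g_S(x_0)‖²
  + L_f² L_g⁴ η² β^{−1} + 2 V_g β`. -/
theorem stmt_14
    (p d n m : ℕ) (hp : 1 ≤ p) (hd : 1 ≤ d) (hn : 1 ≤ n) (hm : 1 ≤ m)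
    (X : Set (EuclideanSpace ℝ (Fin p)))
    (hXne : X.Nonempty) (hXcl : IsClosed X) (hXconv : Convex ℝ X)
    (proj : EuclideanSpace ℝ (Fin p) → EuclideanSpace ℝ (Fin p))
    (hproj : ∀ z, proj z ∈ X ∧ ∀ w ∈ X, dist (proj z) z ≤ dist w z)
    (f : Fin n → EuclideanSpace ℝ (Fin d) → ℝ)
    (g : Fin m → EuclideanSpace ℝ (Fin p) → EuclideanSpace ℝ (Fin d))
    (Lf Lg Vg η β : ℝ)
    (hLf : 0 < Lf) (hLg : 0 < Lg) (hη : 0 < η) (hβ0 : 0 < β) (hβ1 : β < 1)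
    (hfdiff : ∀ i, Differentiable ℝ (f i))
    (hgdiff : ∀ j, Differentiable ℝ (g j))
    (hflip : ∀ i y₁ y₂, |f i y₁ - f i y₂| ≤ Lf * ‖y₁ - y₂‖)
    (hglip : ∀ j x₁ x₂, ‖g j x₁ - g j x₂‖ ≤ Lg * ‖x₁ - x₂‖)
    (gS : EuclideanSpace ℝ (Fin p) → EuclideanSpace ℝ (Fin d))
    (hgS : ∀ z, gS z = (m : ℝ)⁻¹ • ∑ j, g j z)
    (hVg : ∀ z ∈ X, (m : ℝ)⁻¹ * ∑ j, ‖g j z - gS z‖ ^ 2 ≤ Vg)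
    -- random indices
    (Ω : Type) [MeasurableSpace Ω] (μ : Measure Ω) [IsProbabilityMeasure μ]
    (I : ℕ → Ω → Fin n) (J : ℕ → Ω → Fin m)
    (hImeas : ∀ t, Measurable (I t)) (hJmeas : ∀ t, Measurable (J t))
    (hIunif : ∀ t a, μ {ω | I t ω = a} = (n : ℝ≥0∞)⁻¹)
    (hJunif : ∀ t b, μ {ω | J t ω = b} = (m : ℝ≥0∞)⁻¹)
    (hiid : ProbabilityTheory.iIndepFun
      (fun t ω => (I t ω, J t ω)) μ)
    (hIJindep : ∀ t, ProbabilityTheory.IndepFun (I t) (J t) μ)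
    -- SCGD iterates
    (x0 : EuclideanSpace ℝ (Fin p)) (y0 : EuclideanSpace ℝ (Fin d)) (hx0 : x0 ∈ X)
    (x : ℕ → Ω → EuclideanSpace ℝ (Fin p)) (y : ℕ → Ω → EuclideanSpace ℝ (Fin d))
    (hxmeas : ∀ t, Measurable (x t)) (hymeas : ∀ t, Measurable (y t))
    (hxinit : ∀ ω, x 0 ω = x0) (hyinit : ∀ ω, y 0 ω = y0)
    (hyrec : ∀ t ω, y (t + 1) ω = (1 - β) • (y t ω + g (J t ω) (x t ω) - g (J t ω) (x (t - 1) ω)) + β • g (J t ω) (x t ω))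
    (hxrec : ∀ t ω, x (t + 1) ω = proj (x t ω - η •
      (ContinuousLinearMap.adjoint (fderiv ℝ (g (J t ω)) (x t ω))
        (gradient (f (I t ω)) (y (t + 1) ω))))) :
    ∀ t : ℕ, 1 ≤ t → ∀ c : ℝ, 0 < c →
      ∫⁻ ω, (‖y (t + 1) ω - gS (x t ω)‖₊ : ℝ≥0∞) ^ 2 ∂μ ≤
        ENNReal.ofReal ((c / Real.exp 1) ^ c * ((t : ℝ) * β) ^ (-c)) *
            ∫⁻ ω, (‖y 1 ω - gS (x 0 ω)‖₊ : ℝ≥0∞) ^ 2 ∂μ +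
          ENNReal.ofReal (Lf ^ 2 * Lg ^ 4 * η ^ 2 / β + 2 * Vg * β) :=
  stmt_14_general p d n m hm X hXconv proj hproj f g Lf Lg Vg η β hLf hLg hη hβ0 hβ1 hflip hglip gS
    hgS hVg Ω μ I J hImeas hJmeas hJunif hiid x0 y0 hx0 x y hxinit hyinit hyrec hxrec
end

section
/- Let (u_t)_{t≥0} and (α_t)_{t≥1} be nonnegative real sequences, and let (S_t)_{t≥0} be a nondecreasing sequence of nonnegative reals with u_0² ≤ S_0. If u_t² ≤ S_t + ∑_{τ=1}^{t−1} α_τ · u_τ holds for every integer t ≥ 1, then u_t ≤ √S_t + ∑_{τ=1}^{t−1} α_τ holds for every integer t ≥ 0. -/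
/-- Recursion lemma: if `(u_t)` is nonnegative, `(α_t)_{t ≥ 1}` is nonnegative,
`(S_t)` is a nondecreasing nonnegative sequence with `u_0² ≤ S_0`, and
`u_t² ≤ S_t + ∑_{τ=1}^{t-1} α_τ u_τ` for all `t ≥ 1`, then
`u_t ≤ √(S_t) + ∑_{τ=1}^{t-1} α_τ` for all `t ≥ 0`. -/
theorem stmt_15 (u S α : ℕ → ℝ)
    (hu : ∀ t, 0 ≤ u t)
    (hα : ∀ t, 1 ≤ t → 0 ≤ α t)
    (hSnonneg : ∀ t, 0 ≤ S t)
    (hSmono : Monotone S)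
    (hbase : u 0 ^ 2 ≤ S 0)
    (hrec : ∀ t, 1 ≤ t → u t ^ 2 ≤ S t + ∑ τ ∈ Finset.Ico 1 t, α τ * u τ) :
    ∀ t, u t ≤ Real.sqrt (S t) + ∑ τ ∈ Finset.Ico 1 t, α τ := by
  intro t
  induction t using Nat.strong_induction_on with
  | _ t ih =>
    rcases Nat.eq_zero_or_pos t with rfl | ht
    · rw [Finset.Ico_eq_empty (by norm_num), Finset.sum_empty, add_zero]
      calc u 0 = Real.sqrt (u 0 ^ 2) := (Real.sqrt_sq (hu 0)).symm
        _ ≤ Real.sqrt (S 0) := Real.sqrt_le_sqrt hbase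
    · set A := ∑ τ ∈ Finset.Ico 1 t, α τ with hA
      have hAnn : 0 ≤ A := Finset.sum_nonneg fun τ hτ => hα τ (Finset.mem_Ico.mp hτ).1
      have hC : 0 ≤ Real.sqrt (S t) + A := by positivity
      have hbound : ∀ τ ∈ Finset.Ico 1 t, u τ ≤ Real.sqrt (S t) + A := by
        intro τ hτ
        obtain ⟨h1, h2⟩ := Finset.mem_Ico.mp hτ
        calc u τ ≤ Real.sqrt (S τ) + ∑ σ ∈ Finset.Ico 1 τ, α σ := ih τ h2
          _ ≤ Real.sqrt (S t) + A := by
            apply add_le_add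
            · exact Real.sqrt_le_sqrt (hSmono h2.le)
            · exact Finset.sum_le_sum_of_subset_of_nonneg
                (Finset.Ico_subset_Ico le_rfl h2.le)
                (fun σ hσ _ => hα σ (Finset.mem_Ico.mp hσ).1)
      have hsq : u t ^ 2 ≤ (Real.sqrt (S t) + A) ^ 2 := by
        have h1 : u t ^ 2 ≤ S t + ∑ τ ∈ Finset.Ico 1 t, α τ * u τ := hrec t ht
        have h2 : ∑ τ ∈ Finset.Ico 1 t, α τ * u τ ≤ A * (Real.sqrt (S t) + A) := by
          rw [hA, Finset.sum_mul]
          apply Finset.sum_le_sum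
          intro τ hτ
          exact mul_le_mul_of_nonneg_left (hbound τ hτ) (hα τ (Finset.mem_Ico.mp hτ).1)
        have hS : Real.sqrt (S t) ^ 2 = S t := Real.sq_sqrt (hSnonneg t)
        nlinarith [Real.sqrt_nonneg (S t)]
      calc u t = Real.sqrt (u t ^ 2) := (Real.sqrt_sq (hu t)).symm
        _ ≤ Real.sqrt ((Real.sqrt (S t) + A) ^ 2) := Real.sqrt_le_sqrt hsq
        _ = Real.sqrt (S t) + A := Real.sqrt_sq hC
end

section
/- Let F : ℝ^p → ℝ be differentiable and convex, and suppose its gradient ∇F is L-Lipschitz for some L > 0. Then for all u, v ∈ ℝ^p: ⟨∇F(u) − ∇F(v), u − v⟩ ≥ (1/L)·‖∇F(u) − ∇F(v)‖² (co-coercivity of the gradient). -/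
/-!
The descent lemma `F y ≤ F x + ⟪∇F x, y - x⟫ + L/2 ‖y - x‖²` applied at the point
`w = u - (∇F u - ∇F v) / L`, combined with convexity at `v`, sharpens the convexity
inequality at `v` by the term `‖∇F u - ∇F v‖² / (2L)`. Adding this sharpened inequality
to its copy with `u` and `v` exchanged cancels the values of `F` and leaves co-coercivity.
-/

open scoped RealInnerProductSpace

lemma le_add_deriv_add_half_of_deriv_le {g g' : ℝ → ℝ} {M : ℝ}
    (hg : ∀ t, HasDerivAt g (g' t) t) (hbound : ∀ t ∈ Set.Ioo (0 : ℝ) 1, g' t ≤ g' 0 + M * t) :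
    g 1 ≤ g 0 + g' 0 + M / 2 := by
  set ψ : ℝ → ℝ := fun t => g t - t * g' 0 - M / 2 * t ^ 2
  have hψ : ∀ t, HasDerivAt ψ (g' t - g' 0 - M * t) t := by
    intro t
    have h := ((hg t).sub ((hasDerivAt_id t).mul_const (g' 0))).sub
      ((hasDerivAt_pow 2 t).const_mul (M / 2))
    refine h.congr_deriv ?_
    simp only [Nat.cast_ofNat]
    ring
  have hanti : AntitoneOn ψ (Set.Icc 0 1) := by
    refine antitoneOn_of_deriv_nonpos (convex_Icc 0 1)
      (fun t _ => (hψ t).continuousAt.continuousWithinAt)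
      (fun t _ => (hψ t).differentiableAt.differentiableWithinAt) fun t ht => ?_
    rw [interior_Icc] at ht
    linarith [(hψ t).deriv, hbound t ht]
  have h01 := hanti (Set.left_mem_Icc.2 zero_le_one) (Set.right_mem_Icc.2 zero_le_one)
    zero_le_one
  simp only [ψ] at h01
  linarith

section InnerProductSpace

variable {E : Type*} [NormedAddCommGroup E] [InnerProductSpace ℝ E] [CompleteSpace E]
  {F : E → ℝ} {L : ℝ}

lemma hasDerivAt_comp_add_smul (hF : Differentiable ℝ F) (x d : E) (t : ℝ) :
    HasDerivAt (fun s : ℝ => F (x + s • d)) ⟪gradient F (x + t • d), d⟫ t := by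
  have hline : HasDerivAt (fun s : ℝ => x + s • d) d t := by
    simpa using ((hasDerivAt_id t).smul_const d).const_add x
  have h := (hF _).hasGradientAt.hasFDerivAt.comp_hasDerivAt t hline
  rwa [InnerProductSpace.toDual_apply_apply] at h

lemma le_add_inner_gradient_add_sq (hF : Differentiable ℝ F)
    (hlip : ∀ u v, ‖gradient F u - gradient F v‖ ≤ L * ‖u - v‖) (x y : E) :
    F y ≤ F x + ⟪gradient F x, y - x⟫ + L / 2 * ‖y - x‖ ^ 2 := by
  set d := y - x
  have hbound : ∀ t ∈ Set.Ioo (0 : ℝ) 1,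
      ⟪gradient F (x + t • d), d⟫ ≤ ⟪gradient F (x + (0 : ℝ) • d), d⟫ + L * ‖d‖ ^ 2 * t := by
    intro t ht
    have hstep : ‖gradient F (x + t • d) - gradient F x‖ ≤ L * t * ‖d‖ := by
      simpa [norm_smul, abs_of_pos ht.1, mul_assoc] using hlip (x + t • d) x
    calc ⟪gradient F (x + t • d), d⟫
        = ⟪gradient F x, d⟫ + ⟪gradient F (x + t • d) - gradient F x, d⟫ := by
          rw [inner_sub_left]; ring
      _ ≤ ⟪gradient F x, d⟫ + ‖gradient F (x + t • d) - gradient F x‖ * ‖d‖ := by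
          gcongr; exact real_inner_le_norm _ _
      _ ≤ ⟪gradient F x, d⟫ + L * t * ‖d‖ * ‖d‖ := by gcongr
      _ = ⟪gradient F (x + (0 : ℝ) • d), d⟫ + L * ‖d‖ ^ 2 * t := by
          rw [zero_smul, add_zero]; ring
  have h := le_add_deriv_add_half_of_deriv_le (hasDerivAt_comp_add_smul hF x d) hbound
  simp only [one_smul, zero_smul, add_zero, d, add_sub_cancel] at h
  linarith

lemma add_inner_gradient_add_sq_le (hL : 0 < L) (hF : Differentiable ℝ F)
    (hconv : ∀ u v, F v + ⟪gradient F v, u - v⟫ ≤ F u)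
    (hlip : ∀ u v, ‖gradient F u - gradient F v‖ ≤ L * ‖u - v‖) (u v : E) :
    F v + ⟪gradient F v, u - v⟫ + 1 / (2 * L) * ‖gradient F u - gradient F v‖ ^ 2 ≤ F u := by
  set g := gradient F u - gradient F v
  set w := u - L⁻¹ • g
  have hconv_w := hconv w v
  have hdescent := le_add_inner_gradient_add_sq hF hlip u w
  have hwv : w - v = (u - v) - L⁻¹ • g := by simp only [w]; abel
  have hwu : w - u = -(L⁻¹ • g) := by simp only [w]; abel
  have hgg : L⁻¹ * ⟪gradient F u, g⟫ - L⁻¹ * ⟪gradient F v, g⟫ = L⁻¹ * ‖g‖ ^ 2 := by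
    rw [← mul_sub, ← inner_sub_left, real_inner_self_eq_norm_sq]
  rw [hwv, inner_sub_right, real_inner_smul_right] at hconv_w
  rw [hwu, inner_neg_right, real_inner_smul_right, norm_neg, norm_smul, Real.norm_eq_abs,
    abs_of_pos (inv_pos.2 hL)] at hdescent
  have hcoef : L / 2 * (L⁻¹ * ‖g‖) ^ 2 = L⁻¹ * ‖g‖ ^ 2 - 1 / (2 * L) * ‖g‖ ^ 2 := by
    field_simp; ring
  linarith

end InnerProductSpace

/-- Co-coercivity of the gradient of a differentiable convex function with
`L`-Lipschitz gradient on `ℝ^p`: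
`⟪∇F(u) − ∇F(v), u − v⟫ ≥ (1/L)·‖∇F(u) − ∇F(v)‖²`. -/
theorem stmt_17 (p : ℕ) (F : EuclideanSpace ℝ (Fin p) → ℝ) (L : ℝ) (hL : 0 < L)
    (hdiff : Differentiable ℝ F)
    (hconv : ∀ u v, F v + ⟪gradient F v, u - v⟫ ≤ F u)
    (hlip : ∀ u v, ‖gradient F u - gradient F v‖ ≤ L * ‖u - v‖) :
    ∀ u v, (1 / L) * ‖gradient F u - gradient F v‖ ^ 2 ≤
      ⟪gradient F u - gradient F v, u - v⟫ := by
  intro u v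
  have huv := add_inner_gradient_add_sq_le hL hdiff hconv hlip u v
  have hvu := add_inner_gradient_add_sq_le hL hdiff hconv hlip v u
  rw [norm_sub_rev] at hvu
  have hswap : ⟪gradient F u, v - u⟫ = -⟪gradient F u, u - v⟫ := by
    rw [← inner_neg_right, neg_sub]
  have hhalf : ∀ a : ℝ, 1 / (2 * L) * a + 1 / (2 * L) * a = 1 / L * a := fun a => by
    field_simp; ring
  rw [inner_sub_left]
  linarith [hhalf (‖gradient F u - gradient F v‖ ^ 2)]
end
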